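/- The Ricci curvature of the symplectic connection induced on a symplectic submanifold φ: N → V of a symplectic affine space (V, ∇, Ω) equals −smc_{ij}, where smc_{ij} = ω^{ab}Ω_{AB}Π_{ia}{}^AΠ_{jb}{}^B, Π is the second fundamental form of φ with respect to the flat connection ∇ and the induced connection, and ω^{ij} is the bivector inverse to φ^*(Ω)_{ij}. -/

import Mathlib

/- Chart model of a symplectic manifold: the manifold is modeled by (a global affine chart of)
a finite-dimensional real normed vector space `E`; a symplectic form is a smooth field of
nondegenerate antisymmetric bilinear forms (closedness is automatic in the presence of a
compatible torsion-free connection), and a symplectic connection is recorded by its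
(torsion-free) Christoffel symbols, preserving the symplectic form. -/

structure SympForm (E : Type*) [NormedAddCommGroup E] [NormedSpace ℝ E] where
  ω : E → E →L[ℝ] E →L[ℝ] ℝ
  smooth : ContDiff ℝ (⊤ : ℕ∞) ω
  skew : ∀ x u v, ω x u v = - ω x v u
  nondeg : ∀ x u, (∀ v, ω x u v = 0) → u = 0

structure SympConnection {E : Type*} [NormedAddCommGroup E] [NormedSpace ℝ E]
    (Ω : SympForm E) where
  Γ : E → E →L[ℝ] E →L[ℝ] E
  smooth : ContDiff ℝ (⊤ : ℕ∞) Γ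
  symm : ∀ x u v, Γ x u v = Γ x v u
  parallel : ∀ x u v w, fderiv ℝ Ω.ω x u v w = Ω.ω x (Γ x u v) w + Ω.ω x v (Γ x u w)

variable {E : Type*} [NormedAddCommGroup E] [NormedSpace ℝ E]

/-- Curvature `R(u,v)w = ∇_u∇_v w - ∇_v∇_u w - ∇_{[u,v]}w` of a symplectic connection,
evaluated on constant vector fields of the chart, as an operator in `w`. -/
noncomputable def curvOp {Ω : SympForm E} (C : SympConnection Ω) (x u v : E) : E →L[ℝ] E :=
  fderiv ℝ C.Γ x u v - fderiv ℝ C.Γ x v u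
    + (C.Γ x u).comp (C.Γ x v) - (C.Γ x v).comp (C.Γ x u)

/-- Lowered curvature `R_{ijkl} = R_{ijk}{}^p Ω_{pl}`, i.e. `Ω(R(u,v)w, z)`. -/
noncomputable def Rlow {Ω : SympForm E} (C : SympConnection Ω) (x u v w z : E) : ℝ :=
  Ω.ω x (curvOp C x u v w) z

/-- The symplectic curvature quadratic form `scurv_{x,L}(Z)` of the plane `L` spanned by `X, Y`. -/
noncomputable def scurv {Ω : SympForm E} (C : SympConnection Ω) (x X Y Z : E) : ℝ :=
  Rlow C x X Y Z Z / Ω.ω x X Y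

/-- Ricci tensor `R_{ij} = R_{pij}{}^p`: the trace of `w ↦ R(w,u)v`. -/
noncomputable def ricci {Ω : SympForm E} (C : SympConnection Ω) (x u v : E) : ℝ :=
  LinearMap.trace ℝ E
    ((((fderiv ℝ C.Γ x).flip u).flip v - ((fderiv ℝ C.Γ x) u).flip v
      + (C.Γ x).flip (C.Γ x u v) - (C.Γ x u).comp ((C.Γ x).flip v)).toLinearMap)

/-- Covariant derivative `(∇_w Ric)(u,v)` of the Ricci tensor. -/
noncomputable def covDerivRic {Ω : SympForm E} (C : SympConnection Ω) (x w u v : E) : ℝ :=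
  fderiv ℝ (fun y => ricci C y u v) x w - ricci C x (C.Γ x w u) v - ricci C x u (C.Γ x w v)

/-- Covariant derivative `(∇_a R)(u,v,w,z)` of the (lowered) curvature tensor. -/
noncomputable def covDerivR {Ω : SympForm E} (C : SympConnection Ω) (x a u v w z : E) : ℝ :=
  fderiv ℝ (fun y => Rlow C y u v w z) x a
    - Rlow C x (C.Γ x a u) v w z - Rlow C x u (C.Γ x a v) w z
    - Rlow C x u v (C.Γ x a w) z - Rlow C x u v w (C.Γ x a z)

/-- `∇` is locally symmetric: `∇R = 0`. -/
def LocallySymmetric {Ω : SympForm E} (C : SympConnection Ω) : Prop :=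
  ∀ x a u v w z, covDerivR C x a u v w z = 0

/-- The Ricci tensor is parallel. -/
def ParallelRicci {Ω : SympForm E} (C : SympConnection Ω) : Prop :=
  ∀ x w u v, covDerivRic C x w u v = 0

/-- The symplectic Weyl tensor
`W_{ijkl} = R_{ijkl} − (1/(n+1))(Ω_{i(k}R_{l)j} − Ω_{j(k}R_{l)i} + Ω_{ij}R_{kl})`
on a manifold of dimension `2n`. -/
noncomputable def weyl (n : ℕ) {Ω : SympForm E} (C : SympConnection Ω) (x u v w z : E) : ℝ :=
  Rlow C x u v w z - (1 / ((n : ℝ) + 1)) *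
    ((Ω.ω x u w * ricci C x z v + Ω.ω x u z * ricci C x w v) / 2
      - (Ω.ω x v w * ricci C x z u + Ω.ω x v z * ricci C x w u) / 2
      + Ω.ω x u v * ricci C x w z)

/-- `∇` is Weyl flat (of Ricci type): its symplectic Weyl tensor vanishes. -/
def WeylFlat (n : ℕ) {Ω : SympForm E} (C : SympConnection Ω) : Prop :=
  ∀ x u v w z, weyl n C x u v w z = 0

/-- `∇` is preferred: `∇_{(i}R_{jk)} = 0` (cyclic symmetrization suffices since `Ric` is
symmetric in its last two arguments). -/
def Preferred {Ω : SympForm E} (C : SympConnection Ω) : Prop :=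
  ∀ x u v w, covDerivRic C x u v w + covDerivRic C x v w u + covDerivRic C x w u v = 0

/-- Vanishing of the curvature one-form `ρ_i = ∇^p R_{ip}`: the index is raised with `Ω`, and
the `Ω`-contraction is encoded as the trace of any linear packaging `D` of `∇Ric` against `Ω`
(such a `D` exists and is unique by nondegeneracy of `Ω`). -/
def RhoZero {Ω : SympForm E} (C : SympConnection Ω) : Prop :=
  ∀ x u, ∀ D : E →ₗ[ℝ] E,
    (∀ w v, Ω.ω x (D w) v = covDerivRic C x w u v) → LinearMap.trace ℝ E D = 0

/-- `A` is a parallel symmetric covariant 2-tensor field. -/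
def IsParallelSym2 {Ω : SympForm E} (C : SympConnection Ω)
    (A : E → E →L[ℝ] E →L[ℝ] ℝ) : Prop :=
  (∀ x u v, A x u v = A x v u) ∧ Differentiable ℝ A ∧
    ∀ x u v w, fderiv ℝ A x u v w = A x (C.Γ x u v) w + A x v (C.Γ x u w)

/-- `∇` has constant symplectic sectional curvature: there is a parallel symmetric 2-tensor `A`
such that on every 2-dimensional symplectic subspace (spanned by `X, Y` with `Ω(X,Y) ≠ 0`)
the symplectic curvature quadratic form is the restriction of the quadratic form of `A`. -/
def HasConstScurv {Ω : SympForm E} (C : SympConnection Ω) : Prop :=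
  ∃ A : E → E →L[ℝ] E →L[ℝ] ℝ, IsParallelSym2 C A ∧
    ∀ x X Y, Ω.ω x X Y ≠ 0 →
      ∀ Z ∈ Submodule.span ℝ ({X, Y} : Set E), scurv C x X Y Z = A x Z Z

/-- Lie bracket of vector fields on the chart. -/
noncomputable def lieVF (X Y : E → E) (x : E) : E :=
  fderiv ℝ Y x (X x) - fderiv ℝ X x (Y x)

/-- Covariant derivative `∇_X Y` of vector fields on the chart. -/
noncomputable def covVF {Ω : SympForm E} (C : SympConnection Ω) (X Y : E → E) (x : E) : E :=
  fderiv ℝ Y x (X x) + C.Γ x (X x) (Y x)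

/-- Nijenhuis tensor of an endomorphism field, evaluated on constant vector fields. -/
noncomputable def nijTensor (A : E → E → E) (x u v : E) : E :=
  lieVF (fun y => A y u) (fun y => A y v) x
    - A x (lieVF (fun y => A y u) (fun _ => v) x)
    - A x (lieVF (fun _ => u) (fun y => A y v) x)
    + A x (A x (lieVF (fun _ => u) (fun _ => v) x))

/-- Covariant derivative along a curve `γ` of a field `V` along `γ`. -/
noncomputable def covAlong {Ω : SympForm E} (C : SympConnection Ω) (γ V : ℝ → E) (t : ℝ) : E :=
  deriv V t + C.Γ (γ t) (deriv γ t) (V t)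

/-- `(g,J,Ω)` has constant (para-)holomorphic sectional curvature `4c`:
`R_{ijkl} = 2c(Ω_{i(k}g_{l)j} − Ω_{j(k}g_{l)i} + Ω_{ij}g_{kl})`. -/
def ConstHoloSec {Ω : SympForm E} (C : SympConnection Ω) (g : E → E → E → ℝ) (c : ℝ) : Prop :=
  ∀ x u v w z, Rlow C x u v w z =
    2 * c * ((Ω.ω x u w * g x z v + Ω.ω x u z * g x w v) / 2
      - (Ω.ω x v w * g x z u + Ω.ω x v z * g x w u) / 2
      + Ω.ω x u v * g x w z)

/-- `C` is the Levi-Civita connection of the metric `g`: `C` is torsion free and `∇g = 0`. -/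
def IsLeviCivita {Ω : SympForm E} (C : SympConnection Ω) (g : E → E → E → ℝ) : Prop :=
  ∀ x u v w, fderiv ℝ (fun y => g y v w) x u = g x (C.Γ x u v) w + g x v (C.Γ x u w)


/-! The pullback `φ^*∇` of the flat connection has vanishing curvature. Splitting
`∇_u φ_* v = φ_*(∇̄_u v) + Π(u,v)` and pairing that vanishing curvature with `φ_* z` gives the
Gauss equation `ω(R̄(w,u)v, z) = Ω(Π(u,v), Π(w,z)) - Ω(Π(w,v), Π(u,z))`; the normal terms are
computed by differentiating `Ω(Π, φ_* ·) = 0`. Since `Π` is symmetric, the Gauss equation makes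
`w ↦ R̄(w,u)v + smc(w)` skew-adjoint for `ω`, and skew-adjoint endomorphisms are traceless. -/

namespace LinearMap

variable {K V : Type*} [Field K] [AddCommGroup V] [Module K V] [FiniteDimensional K V]
  {B : V →ₗ[K] V →ₗ[K] K}

/-- `B` identifies `V` with its dual, turning `f` into the transpose of `g`. -/
theorem trace_eq_of_isAdjointPair (hB : B.SeparatingLeft) {f g : V →ₗ[K] V}
    (h : IsAdjointPair B B f g) : trace K V f = trace K V g := by
  have hinj : Function.Injective B := ker_eq_bot.mp (separatingLeft_iff_ker_eq_bot.mp hB)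
  let e : V ≃ₗ[K] Module.Dual K V :=
    B.linearEquivOfInjective hinj (Subspace.dual_finrank_eq (V := V)).symm
  have hf : f = e.symm.conj (Module.Dual.transpose (R := K) g) := by
    ext v
    apply e.injective
    ext w
    simpa [e, Module.Dual.transpose_apply] using h v w
  rw [hf, trace_conj', trace_transpose']

theorem trace_eq_zero_of_isSkewAdjoint [CharZero K] (hB : B.SeparatingLeft) {f : V →ₗ[K] V}
    (h : IsSkewAdjoint B f) : trace K V f = 0 := by
  have := trace_eq_of_isAdjointPair (g := -f) hB h
  rw [map_neg] at this
  exact CharZero.eq_neg_self_iff.mp this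

end LinearMap

section AlongMap

variable {F : Type*} [NormedAddCommGroup F] [NormedSpace ℝ F]
  {Ω : SympForm E} (C : SympConnection Ω) (φ : F → E)

/-- The pullback connection `(φ^*∇)_u V` on sections `V` of `φ^*TE`. -/
noncomputable def covAlongMap (V : F → E) (y u : F) : E :=
  fderiv ℝ V y u + C.Γ (φ y) (fderiv ℝ φ y u) (V y)

variable {C φ}

theorem covAlongMap_add {V W : F → E} {y : F} (hV : DifferentiableAt ℝ V y)
    (hW : DifferentiableAt ℝ W y) (u : F) :
    covAlongMap C φ (fun y => V y + W y) y u = covAlongMap C φ V y u + covAlongMap C φ W y u := by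
  simp only [covAlongMap, fderiv_fun_add hV hW, add_apply, map_add]
  abel

theorem fderiv_ω_eq_covAlongMap {V W : F → E} {x : F} (hφ : DifferentiableAt ℝ φ x)
    (hV : DifferentiableAt ℝ V x) (hW : DifferentiableAt ℝ W x) (w : F) :
    fderiv ℝ (fun y => Ω.ω (φ y) (V y) (W y)) x w
      = Ω.ω (φ x) (covAlongMap C φ V x w) (W x) + Ω.ω (φ x) (V x) (covAlongMap C φ W x w) := by
  have hΩ : Differentiable ℝ Ω.ω := Ω.smooth.differentiable (by simp)
  have hΩφ : HasFDerivAt (fun y => Ω.ω (φ y)) ((fderiv ℝ Ω.ω (φ x)).comp (fderiv ℝ φ x)) x :=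
    HasFDerivAt.comp (g := Ω.ω) x (hΩ (φ x)).hasFDerivAt hφ.hasFDerivAt
  rw [((hΩφ.clm_apply hV.hasFDerivAt).clm_apply hW.hasFDerivAt).fderiv]
  simp only [covAlongMap, add_apply, ContinuousLinearMap.comp_apply,
    ContinuousLinearMap.flip_apply, map_add, C.parallel]
  ring

theorem covAlongMap_covAlongMap_sub_swap {V : F → E} (hφ : ContDiff ℝ 2 φ) (hV : ContDiff ℝ 2 V)
    (x u w : F) :
    covAlongMap C φ (fun y => covAlongMap C φ V y u) x w
      - covAlongMap C φ (fun y => covAlongMap C φ V y w) x u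
      = curvOp C (φ x) (fderiv ℝ φ x w) (fderiv ℝ φ x u) (V x) := by
  have hΓ : Differentiable ℝ C.Γ := C.smooth.differentiable (by simp)
  have h1 : (1 : WithTop ℕ∞) + 1 ≤ 2 := by norm_num
  have hdφ := (hφ.fderiv_right h1).differentiable one_ne_zero
  have hdV := (hV.fderiv_right h1).differentiable one_ne_zero
  have hφ' := hφ.differentiable two_ne_zero
  have hV' := hV.differentiable two_ne_zero
  have expand : ∀ a b, covAlongMap C φ (fun y => covAlongMap C φ V y a) x b
      = fderiv ℝ (fderiv ℝ V) x b a + fderiv ℝ C.Γ (φ x) (fderiv ℝ φ x b) (fderiv ℝ φ x a) (V x)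
        + C.Γ (φ x) (fderiv ℝ (fderiv ℝ φ) x b a) (V x)
        + C.Γ (φ x) (fderiv ℝ φ x a) (fderiv ℝ V x b)
        + C.Γ (φ x) (fderiv ℝ φ x b) (fderiv ℝ V x a + C.Γ (φ x) (fderiv ℝ φ x a) (V x)) := by
    intro a b
    have hΓφ : HasFDerivAt (fun y => C.Γ (φ y)) ((fderiv ℝ C.Γ (φ x)).comp (fderiv ℝ φ x)) x :=
      HasFDerivAt.comp (g := C.Γ) x (hΓ (φ x)).hasFDerivAt (hφ' x).hasFDerivAt
    have h : HasFDerivAt (fun y => covAlongMap C φ V y a) _ x :=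
      ((hdV x).hasFDerivAt.clm_apply (hasFDerivAt_const a x)).add
        ((hΓφ.clm_apply ((hdφ x).hasFDerivAt.clm_apply (hasFDerivAt_const a x))).clm_apply
          (hV' x).hasFDerivAt)
    rw [covAlongMap, h.fderiv]
    simp only [ContinuousLinearMap.comp_zero, zero_add, ContinuousLinearMap.flip_add, add_apply,
      ContinuousLinearMap.flip_apply, ContinuousLinearMap.comp_apply, covAlongMap, map_add,
      add_left_inj]
    abel
  rw [expand, expand, (hV.contDiffAt.isSymmSndFDerivAt (by simp)) w u,
    (hφ.contDiffAt.isSymmSndFDerivAt (by simp)) w u]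
  simp only [curvOp, add_apply, sub_apply, ContinuousLinearMap.comp_apply, map_add]
  abel

end AlongMap

section Submanifold

variable {F : Type*} [NormedAddCommGroup F] [NormedSpace ℝ F]
  {Ω : SympForm E} {C : SympConnection Ω} {φ : F → E} {ΩN : SympForm F}
  {CN : SympConnection ΩN} {sff : F → F → F → E}

structure IsSecondFundamentalForm (C : SympConnection Ω) (φ : F → E) (CN : SympConnection ΩN)
    (sff : F → F → F → E) : Prop where
  decomp : ∀ y u v,
    covAlongMap C φ (fun y => fderiv ℝ φ y v) y u = fderiv ℝ φ y (CN.Γ y u v) + sff y u v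
  perp : ∀ y u v w, Ω.ω (φ y) (sff y u v) (fderiv ℝ φ y w) = 0

namespace IsSecondFundamentalForm

theorem sff_eq (h : IsSecondFundamentalForm C φ CN sff) {y : F}
    (hφ : DifferentiableAt ℝ (fderiv ℝ φ) y) (u v : F) :
    sff y u v = fderiv ℝ (fderiv ℝ φ) y u v + C.Γ (φ y) (fderiv ℝ φ y u) (fderiv ℝ φ y v)
      - fderiv ℝ φ y (CN.Γ y u v) := by
  have hd := h.decomp y u v
  rw [covAlongMap, fderiv_clm_apply hφ (differentiableAt_const v)] at hd
  simp only [fderiv_fun_const, Pi.zero_apply, ContinuousLinearMap.comp_zero, zero_add,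
    ContinuousLinearMap.flip_apply] at hd
  rw [hd, add_sub_cancel_left]

theorem sff_symm (h : IsSecondFundamentalForm C φ CN sff) (hφ : ContDiff ℝ 2 φ) (y u v : F) :
    sff y u v = sff y v u := by
  have hdφ := ((hφ.fderiv_right (m := 1) (by norm_num)).differentiable one_ne_zero) y
  rw [h.sff_eq hdφ, h.sff_eq hdφ, (hφ.contDiffAt.isSymmSndFDerivAt (by simp)) u v, C.symm,
    CN.symm]

theorem differentiable_sff (h : IsSecondFundamentalForm C φ CN sff) (hφ : ContDiff ℝ 3 φ)
    (u v : F) : Differentiable ℝ (fun y => sff y u v) := by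
  have hdφ := (hφ.fderiv_right (m := 2) (by norm_num)).differentiable two_ne_zero
  have hd2φ := ((hφ.fderiv_right (m := 2) (by norm_num)).fderiv_right (m := 1)
    (by norm_num)).differentiable one_ne_zero
  have hΓφ : Differentiable ℝ (fun y => C.Γ (φ y)) :=
    (C.smooth.differentiable (by simp)).comp (hφ.differentiable (by norm_num))
  have hΓN : Differentiable ℝ CN.Γ := CN.smooth.differentiable (by simp)
  simp_rw [h.sff_eq (hdφ _)]
  fun_prop

theorem covAlongMap_fderiv_apply (h : IsSecondFundamentalForm C φ CN sff) {X : F → F} {x : F}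
    (hφ : DifferentiableAt ℝ (fderiv ℝ φ) x) (hX : DifferentiableAt ℝ X x) (w : F) :
    covAlongMap C φ (fun y => fderiv ℝ φ y (X y)) x w
      = fderiv ℝ φ x (fderiv ℝ X x w + CN.Γ x w (X x)) + sff x w (X x) := by
  have hd := h.decomp x w (X x)
  rw [covAlongMap, fderiv_clm_apply hφ (differentiableAt_const _)] at hd
  rw [covAlongMap, fderiv_clm_apply hφ hX, map_add, add_assoc _ (fderiv ℝ φ x _), ← hd]
  simp only [add_apply, ContinuousLinearMap.comp_apply, ContinuousLinearMap.flip_apply,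
    fderiv_fun_const, Pi.zero_apply, ContinuousLinearMap.comp_zero, zero_add]
  abel

theorem ω_covAlongMap_sff (h : IsSecondFundamentalForm C φ CN sff) (hφ : ContDiff ℝ 3 φ)
    (x u v w z : F) :
    Ω.ω (φ x) (covAlongMap C φ (fun y => sff y u v) x w) (fderiv ℝ φ x z)
      = - Ω.ω (φ x) (sff x u v) (sff x w z) := by
  have hdφ := (hφ.fderiv_right (m := 2) (by norm_num)).differentiable two_ne_zero
  have hleib := fderiv_ω_eq_covAlongMap (C := C) (hφ.differentiable (by norm_num) x)
    (h.differentiable_sff hφ u v x) ((hdφ x).clm_apply (differentiableAt_const z)) w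
  simp only [h.perp, fderiv_fun_const, Pi.zero_apply, zero_apply] at hleib
  rw [h.decomp, map_add, h.perp] at hleib
  linarith

theorem ω_covAlongMap_covAlongMap_fderiv (h : IsSecondFundamentalForm C φ CN sff)
    (hφ : ContDiff ℝ 3 φ)
    (hΩN : ∀ x u v, ΩN.ω x u v = Ω.ω (φ x) (fderiv ℝ φ x u) (fderiv ℝ φ x v)) (x u v w z : F) :
    Ω.ω (φ x) (covAlongMap C φ (fun y => covAlongMap C φ (fun y => fderiv ℝ φ y v) y u) x w)
        (fderiv ℝ φ x z)
      = ΩN.ω x (fderiv ℝ CN.Γ x w u v + CN.Γ x w (CN.Γ x u v)) z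
        - Ω.ω (φ x) (sff x u v) (sff x w z) := by
  have hdφ := (hφ.fderiv_right (m := 2) (by norm_num)).differentiable two_ne_zero
  have hΓNx := ((CN.smooth.differentiable (by simp)) x).hasFDerivAt
  have hΓN := (hΓNx.clm_apply (hasFDerivAt_const u x)).clm_apply (hasFDerivAt_const v x)
  simp_rw [h.decomp]
  rw [covAlongMap_add ((hdφ x).clm_apply hΓN.differentiableAt)
      (h.differentiable_sff hφ u v x),
    h.covAlongMap_fderiv_apply (hdφ x) hΓN.differentiableAt, map_add, map_add, add_apply,
    add_apply, h.perp, h.ω_covAlongMap_sff hφ, ← hΩN, hΓN.fderiv]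
  simp only [ContinuousLinearMap.comp_zero, zero_add, ContinuousLinearMap.flip_apply, map_add,
    add_apply, add_zero]
  ring

theorem gauss_equation (h : IsSecondFundamentalForm C φ CN sff) (hφ : ContDiff ℝ 3 φ)
    (hΩN : ∀ x u v, ΩN.ω x u v = Ω.ω (φ x) (fderiv ℝ φ x u) (fderiv ℝ φ x v))
    (hflat : ∀ p a b c, curvOp C p a b c = 0) (x u v w z : F) :
    ΩN.ω x (curvOp CN x w u v) z
      = Ω.ω (φ x) (sff x u v) (sff x w z) - Ω.ω (φ x) (sff x w v) (sff x u z) := by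
  have hV : ContDiff ℝ 2 (fun y => fderiv ℝ φ y v) :=
    (hφ.fderiv_right (m := 2) (by norm_num)).clm_apply contDiff_const
  have hcomm := covAlongMap_covAlongMap_sub_swap (C := C) (hφ.of_le (by norm_num)) hV x u w
  rw [hflat] at hcomm
  have hω := congrArg (fun e => Ω.ω (φ x) e (fderiv ℝ φ x z)) hcomm
  simp only [map_sub, sub_apply, map_zero, zero_apply,
    h.ω_covAlongMap_covAlongMap_fderiv hφ hΩN] at hω
  simp only [curvOp, add_apply, sub_apply, ContinuousLinearMap.comp_apply, map_add, map_sub]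
    at hω ⊢
  linarith

end IsSecondFundamentalForm
end Submanifold

theorem ricci_add_trace_eq_zero [FiniteDimensional ℝ E] {Ω : SympForm E} (C : SympConnection Ω)
    {x u v : E} {D : E →ₗ[ℝ] E}
    (hD : ∀ w z, Ω.ω x (curvOp C x w u v + D w) z = - Ω.ω x w (curvOp C x z u v + D z)) :
    ricci C x u v + LinearMap.trace ℝ E D = 0 := by
  rw [ricci, ← map_add]
  refine LinearMap.trace_eq_zero_of_isSkewAdjoint (B := (Ω.ω x).toLinearMap₁₂)
    (Ω.nondeg x) fun w z => ?_
  simpa [curvOp] using hD w z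

theorem statement_14_general {E F : Type*}
    [NormedAddCommGroup E] [NormedSpace ℝ E]
    [NormedAddCommGroup F] [NormedSpace ℝ F] [FiniteDimensional ℝ F]
    (Ω : SympForm E) (C : SympConnection Ω)
    (hflat : ∀ x u v w, curvOp C x u v w = 0)
    (φ : F → E) (hφ : ContDiff ℝ (⊤ : ℕ∞) φ)
    (ΩN : SympForm F)
    (hΩN : ∀ x u v, ΩN.ω x u v = Ω.ω (φ x) (fderiv ℝ φ x u) (fderiv ℝ φ x v))
    (CN : SympConnection ΩN)
    (sff : F → F → F → E)
    (hdecomp : ∀ x u v,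
      fderiv ℝ (fun y => fderiv ℝ φ y v) x u
        + C.Γ (φ x) (fderiv ℝ φ x u) (fderiv ℝ φ x v)
      = fderiv ℝ φ x (CN.Γ x u v) + sff x u v)
    (hperp : ∀ x u v w, Ω.ω (φ x) (sff x u v) (fderiv ℝ φ x w) = 0) :
    ∀ x u v, ∀ D : F →ₗ[ℝ] F,
      (∀ a b, ΩN.ω x (D a) b = Ω.ω (φ x) (sff x u a) (sff x v b)) →
      ricci CN x u v = - LinearMap.trace ℝ F D := by
  intro x u v D hD
  have h : IsSecondFundamentalForm C φ CN sff := ⟨hdecomp, hperp⟩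
  have hφ3 : ContDiff ℝ 3 φ := hφ.of_le (WithTop.coe_le_coe.mpr le_top)
  have hsymm := h.sff_symm (hφ3.of_le (by norm_num)) x
  refine eq_neg_of_add_eq_zero_left (ricci_add_trace_eq_zero CN fun w z => ?_)
  rw [map_add, map_add, add_apply, h.gauss_equation hφ3 hΩN hflat, ΩN.skew x w,
    ΩN.skew x w, h.gauss_equation hφ3 hΩN hflat, hD, hD, hsymm w z, hsymm w v, hsymm z v,
    Ω.skew _ (sff x v z), Ω.skew _ (sff x v w)]
  ring

/-- Let `(E, ∇, Ω)` be a symplectic affine space (a vector space with a flat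
affine connection `C` and a parallel symplectic form `Ω`), and let `φ : N → E` be a
symplectic submanifold (symplectic immersion), with induced symplectic connection `CN` and
second fundamental form `sff`.  Then the Ricci curvature of `CN` equals `-smc`, where
`smc(u,v) = ω^{ab}Ω_{AB}Π_{ua}{}^AΠ_{vb}{}^B` is encoded as the trace of any linear
packaging `D` with `ω(D a, b) = Ω(Π(u,a), Π(v,b))`. -/
theorem statement_14 {E F : Type*}
    [NormedAddCommGroup E] [NormedSpace ℝ E] [FiniteDimensional ℝ E]
    [NormedAddCommGroup F] [NormedSpace ℝ F] [FiniteDimensional ℝ F]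
    (Ω : SympForm E) (C : SympConnection Ω)
    (hflat : ∀ x u v w, curvOp C x u v w = 0)
    (φ : F → E) (hφ : ContDiff ℝ (⊤ : ℕ∞) φ)
    (ΩN : SympForm F)
    (hΩN : ∀ x u v, ΩN.ω x u v = Ω.ω (φ x) (fderiv ℝ φ x u) (fderiv ℝ φ x v))
    (CN : SympConnection ΩN)
    (sff : F → F → F → E)
    (hdecomp : ∀ x u v,
      fderiv ℝ (fun y => fderiv ℝ φ y v) x u
        + C.Γ (φ x) (fderiv ℝ φ x u) (fderiv ℝ φ x v)
      = fderiv ℝ φ x (CN.Γ x u v) + sff x u v)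
    (hperp : ∀ x u v w, Ω.ω (φ x) (sff x u v) (fderiv ℝ φ x w) = 0) :
    ∀ x u v, ∀ D : F →ₗ[ℝ] F,
      (∀ a b, ΩN.ω x (D a) b = Ω.ω (φ x) (sff x u a) (sff x v b)) →
      ricci CN x u v = - LinearMap.trace ℝ F D :=
  statement_14_general Ω C hflat φ hφ ΩN hΩN CN sff hdecomp hperp
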